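/- Let ℐ be a strictly positive ideal of Φ⁺ (an upper order ideal with ℐ ∩ Π = ∅, Π the simple roots). For γ ∈ Φ⁺ define γ_{ℐ,−} := min{ k : γ = γ₁ + ⋯ + γ_{k+1} with all γᵢ ∈ Φ⁺ \ ℐ }. Then for α, β, α+β ∈ Φ⁺, with a = α_{ℐ,−}, b = β_{ℐ,−}, c = (α+β)_{ℐ,−}, we have a + b ≤ c ≤ a + b + 1. -/

import Mathlib

open RealInnerProductSpace
open scoped Classical

variable {V : Type*} [NormedAddCommGroup V] [InnerProductSpace ℝ V] [FiniteDimensional ℝ V]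

/-- A finite crystallographic root system in the real inner product space `V`. -/
structure IsRootSystem (Φ : Set V) : Prop where
  finite : Φ.Finite
  nonzero : (0 : V) ∉ Φ
  spanning : Submodule.span ℝ Φ = ⊤
  reflect_mem : ∀ α ∈ Φ, ∀ β ∈ Φ, β - (2 * ⟪β, α⟫ / ⟪α, α⟫) • α ∈ Φ
  crystallographic : ∀ α ∈ Φ, ∀ β ∈ Φ, ∃ n : ℤ, 2 * ⟪β, α⟫ / ⟪α, α⟫ = (n : ℝ)

/-- `Pos` is a system of positive roots for `Φ`: the roots on the positive side of a
generic linear functional. -/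
def IsPositiveSystem (Φ Pos : Set V) : Prop :=
  ∃ f : V →ₗ[ℝ] ℝ, (∀ α ∈ Φ, f α ≠ 0) ∧ Pos = {α ∈ Φ | 0 < f α}

/-- Irreducibility of a root system: no splitting into two nonempty orthogonal parts. -/
def IsIrreducibleRootSystem (Φ : Set V) : Prop :=
  Φ.Nonempty ∧ ∀ Φ₁ Φ₂ : Set V, Φ = Φ₁ ∪ Φ₂ →
    (∀ α ∈ Φ₁, ∀ β ∈ Φ₂, ⟪α, β⟫ = 0) → Φ₁ = ∅ ∨ Φ₂ = ∅

/-- A simple root: a positive root that is not the sum of two positive roots. -/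
def IsSimpleRoot (Pos : Set V) (α : V) : Prop :=
  α ∈ Pos ∧ ∀ β ∈ Pos, ∀ γ ∈ Pos, α ≠ β + γ

/-- An upper order ideal of the positive roots. -/
def IsUpperIdeal (Pos I : Set V) : Prop :=
  I ⊆ Pos ∧ ∀ α ∈ I, ∀ β ∈ Pos, α + β ∈ Pos → α + β ∈ I

/-- `γ` is a sum of `k` elements of `S`. -/
def IsSumOf (S : Set V) (k : ℕ) (γ : V) : Prop :=
  ∃ f : Fin k → V, (∀ i, f i ∈ S) ∧ ∑ i, f i = γ

/-- The standard partial order on roots: `α ≼ γ` iff `γ - α` is a (possibly empty)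
sum of positive roots. -/
def RootLE (Pos : Set V) (α γ : V) : Prop := ∃ k, IsSumOf Pos k (γ - α)

/-- The set of minimal roots of an ideal `I`. -/
def minimalRoots (Pos I : Set V) : Set V :=
  {α | α ∈ I ∧ ∀ β ∈ I, RootLE Pos β α → β = α}

/-- `γ_{I,+}`: the maximal number of summands in a decomposition of `γ` as a sum of
elements of `I` (with junk value `0` if no decomposition exists). -/
noncomputable def aPlus (I : Set V) (γ : V) : ℕ := sSup {k | IsSumOf I k γ}

/-- `γ_{I,-}`: the minimal `k` such that `γ` is a sum of `k + 1` elements of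
`Pos \ I`. -/
noncomputable def aMinus (Pos I : Set V) (γ : V) : ℕ := sInf {k | IsSumOf (Pos \ I) (k + 1) γ}

/-- The height of a positive root: the number of summands when written as a sum of
simple roots. -/
noncomputable def rootHeight (Pos : Set V) (γ : V) : ℕ :=
  sSup {k | IsSumOf {α | IsSimpleRoot Pos α} k γ}

/-!
The upper bound comes from concatenating optimal decompositions of `α` and `β`. For the lower
bound, an optimal decomposition of `α + β` into `c + 1` elements of `Φ⁺ \ ℐ` is redistributed
into decompositions of `α` and `β` with at most `c + 2` summands in total: a summand `ρ` with
`⟪ρ, α⟫ > 0` exists up to swapping `α` and `β`, so `α - ρ` is zero or a root, and the ideal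
property keeps every new summand outside `ℐ`.
-/

section

omit [InnerProductSpace ℝ V] [FiniteDimensional ℝ V]

theorem IsUpperIdeal.left_notMem {Pos I : Set V} (hI : IsUpperIdeal Pos I) {a b : V}
    (hb : b ∈ Pos) (hab : a + b ∈ Pos \ I) : a ∉ I :=
  fun ha => hab.2 (hI.2 a ha b hb hab.1)

theorem IsUpperIdeal.right_notMem {Pos I : Set V} (hI : IsUpperIdeal Pos I) {a b : V}
    (ha : a ∈ Pos) (hab : a + b ∈ Pos \ I) : b ∉ I :=
  hI.left_notMem ha (add_comm a b ▸ hab)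

namespace IsSumOf

variable {S : Set V} {k : ℕ} {γ : V}

theorem eq_zero (h : IsSumOf S 0 γ) : γ = 0 := by
  obtain ⟨g, -, rfl⟩ := h
  simp

theorem single {x : V} (hx : x ∈ S) : IsSumOf S 1 x :=
  ⟨fun _ => x, fun _ => hx, by simp⟩

theorem add {j : ℕ} {δ : V} (hγ : IsSumOf S k γ) (hδ : IsSumOf S j δ) :
    IsSumOf S (k + j) (γ + δ) := by
  obtain ⟨g, hg, rfl⟩ := hγ
  obtain ⟨h, hh, rfl⟩ := hδ
  exact ⟨Fin.append g h, Fin.addCases (by simpa using hg) (by simpa using hh),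
    by simp [Fin.sum_univ_add]⟩

end IsSumOf

section aMinus

variable {Pos I : Set V} {k : ℕ} {γ : V}

theorem isSumOf_aMinus_succ (h : ∃ k, IsSumOf (Pos \ I) (k + 1) γ) :
    IsSumOf (Pos \ I) (aMinus Pos I γ + 1) γ :=
  Nat.sInf_mem h

theorem aMinus_le (h : IsSumOf (Pos \ I) (k + 1) γ) : aMinus Pos I γ ≤ k :=
  Nat.sInf_le h

theorem aMinus_lt (h : IsSumOf (Pos \ I) k γ) (hγ : γ ≠ 0) : aMinus Pos I γ < k := by
  cases k with
  | zero => exact absurd h.eq_zero hγ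
  | succ k => exact Nat.lt_succ_of_le (aMinus_le h)

end aMinus

end

section

omit [FiniteDimensional ℝ V]

namespace IsRootSystem

variable {Φ : Set V} (hΦ : IsRootSystem Φ)
include hΦ

theorem neg_mem {a : V} (ha : a ∈ Φ) : -a ∈ Φ := by
  have haa : ⟪a, a⟫ ≠ 0 := real_inner_self_pos.mpr (ne_of_mem_of_not_mem ha hΦ.nonzero) |>.ne'
  have h := hΦ.reflect_mem a ha a ha
  rwa [mul_div_assoc, div_self haa, mul_one, two_smul, sub_add_cancel_left] at h

/-- If the Cartan integers `⟨a, t^∨⟩` and `⟨t, a^∨⟩` are both at least `2`, then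
`‖a - t‖² = ‖a‖² + ‖t‖² - 2⟪a, t⟫ ≤ 0`; otherwise one of them is `1` and a reflection
produces `±(a - t)`. -/
theorem eq_or_sub_mem_of_inner_pos {a t : V} (ha : a ∈ Φ) (ht : t ∈ Φ) (hat : 0 < ⟪a, t⟫) :
    a = t ∨ a - t ∈ Φ := by
  have haa : 0 < ⟪a, a⟫ := real_inner_self_pos.mpr (ne_of_mem_of_not_mem ha hΦ.nonzero)
  have htt : 0 < ⟪t, t⟫ := real_inner_self_pos.mpr (ne_of_mem_of_not_mem ht hΦ.nonzero)
  have hta : ⟪t, a⟫ = ⟪a, t⟫ := real_inner_comm a t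
  obtain ⟨n, hn⟩ := hΦ.crystallographic t ht a ha
  obtain ⟨m, hm⟩ := hΦ.crystallographic a ha t ht
  have hn0 : (0 : ℝ) < n := hn ▸ by positivity
  have hm0 : (0 : ℝ) < m := hm ▸ by rw [hta]; positivity
  rcases (show 1 ≤ n by exact_mod_cast hn0).eq_or_lt with rfl | hn2
  · right
    have h := hΦ.reflect_mem t ht a ha
    rwa [hn, Int.cast_one, one_smul] at h
  rcases (show 1 ≤ m by exact_mod_cast hm0).eq_or_lt with rfl | hm2
  · right
    have h := hΦ.neg_mem (hΦ.reflect_mem a ha t ht)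
    rwa [hm, Int.cast_one, one_smul, neg_sub] at h
  left
  have hn2 : (2 : ℝ) ≤ n := by exact_mod_cast hn2
  have hm2 : (2 : ℝ) ≤ m := by exact_mod_cast hm2
  rw [div_eq_iff htt.ne'] at hn
  rw [div_eq_iff haa.ne', hta] at hm
  have hdist : ⟪a - t, a - t⟫ ≤ 0 := by
    rw [inner_sub_left, inner_sub_right, inner_sub_right, hta]
    nlinarith
  exact sub_eq_zero.mp (real_inner_self_nonpos.mp hdist)

end IsRootSystem

namespace IsPositiveSystem

variable {Φ Pos : Set V}

theorem subset (hPos : IsPositiveSystem Φ Pos) : Pos ⊆ Φ := by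
  obtain ⟨f, -, rfl⟩ := hPos
  exact Set.sep_subset _ _

theorem mem_or_neg_mem (hPos : IsPositiveSystem Φ Pos) (hΦ : IsRootSystem Φ) {a : V}
    (ha : a ∈ Φ) : a ∈ Pos ∨ -a ∈ Pos := by
  obtain ⟨f, hf, rfl⟩ := hPos
  rcases (hf a ha).lt_or_gt with hneg | hpos
  · exact Or.inr ⟨hΦ.neg_mem ha, by simpa using hneg⟩
  · exact Or.inl ⟨ha, hpos⟩

end IsPositiveSystem

namespace IsSumOf

variable {S : Set V} {k : ℕ} {γ : V}

theorem exists_inner_pos (h : IsSumOf S (k + 1) γ) {y : V} (hy : 0 < ⟪γ, y⟫) :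
    ∃ ρ ∈ S, 0 < ⟪ρ, y⟫ ∧ IsSumOf S k (γ - ρ) := by
  obtain ⟨g, hg, rfl⟩ := h
  rw [sum_inner] at hy
  obtain ⟨i, -, hi⟩ := Finset.exists_lt_of_sum_lt (f := fun _ => (0 : ℝ)) (by simpa using hy)
  refine ⟨g i, hg i, hi, fun j => g (i.succAbove j), fun j => hg _, ?_⟩
  rw [Fin.sum_univ_succAbove g i, add_sub_cancel_left]

end IsSumOf

section Ideal

variable {Φ Pos I : Set V}

/-- Peel off a summand `ρ` of `α + β` with `⟪ρ, α⟫ > 0`: either `ρ` is `α + β` or `α`, or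
`ρ - α` is a positive root that joins the summands of `β`, or `α - ρ` is a positive root
and we recurse. -/
theorem IsSumOf.exists_split (hΦ : IsRootSystem Φ) (hPos : IsPositiveSystem Φ Pos)
    (hI : IsUpperIdeal Pos I) {n : ℕ} {α β : V} (h : IsSumOf (Pos \ I) n (α + β))
    (hα : α ∈ Pos) (hβ : β ∈ Pos) (hαβ : α + β ∈ Φ) :
    ∃ i j, IsSumOf (Pos \ I) i α ∧ IsSumOf (Pos \ I) j β ∧ i + j ≤ n + 1 := by
  induction n generalizing α β with
  | zero => exact absurd (h.eq_zero ▸ hαβ) hΦ.nonzero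
  | succ n ih =>
    wlog hsplit : ∃ ρ ∈ Pos \ I, 0 < ⟪ρ, α⟫ ∧ 0 < ⟪ρ, α + β⟫ ∧
        IsSumOf (Pos \ I) n (α + β - ρ) generalizing α β
    · have hγ : 0 < ⟪α + β, α + β⟫ :=
        real_inner_self_pos.mpr (ne_of_mem_of_not_mem hαβ hΦ.nonzero)
      obtain ⟨ρ, hρ, hργ, hrest⟩ := h.exists_inner_pos hγ
      have hρβ : 0 < ⟪ρ, β⟫ := by
        by_contra hρβ
        exact hsplit ⟨ρ, hρ, by rw [inner_add_right] at hργ; linarith, hργ, hrest⟩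
      rw [add_comm α β] at h hαβ hργ hrest
      obtain ⟨j, i, hj, hi, hji⟩ := this h hβ hα hαβ ⟨ρ, hρ, hρβ, hργ, hrest⟩
      exact ⟨i, j, hi, hj, by omega⟩
    obtain ⟨ρ, hρ, hρα, hργ, hrest⟩ := hsplit
    have hρΦ := hPos.subset hρ.1
    rcases hΦ.eq_or_sub_mem_of_inner_pos hαβ hρΦ (by rwa [real_inner_comm]) with hγρ | hγρ
    · rw [← hγρ] at hρ
      exact ⟨1, 1, .single ⟨hα, hI.left_notMem hβ hρ⟩, .single ⟨hβ, hI.right_notMem hα hρ⟩,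
        by omega⟩
    rcases hΦ.eq_or_sub_mem_of_inner_pos (hPos.subset hα) hρΦ (by rwa [real_inner_comm])
      with rfl | hαρ
    · exact ⟨1, n, .single hρ, by rwa [add_sub_cancel_left] at hrest, by omega⟩
    rcases hPos.mem_or_neg_mem hΦ hαρ with hαρPos | hραPos
    · have hsum : α - ρ + β = α + β - ρ := sub_add_eq_add_sub α ρ β
      obtain ⟨i, j, hi, hj, hij⟩ := ih (hsum ▸ hrest) hαρPos hβ (hsum ▸ hγρ)
      exact ⟨i + 1, j, by simpa using hi.add (.single hρ), hj, by omega⟩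
    · rw [neg_sub] at hραPos
      have hρ' : α + (ρ - α) ∈ Pos \ I := by rwa [add_sub_cancel]
      have hβ' := (IsSumOf.single (S := Pos \ I) ⟨hραPos, hI.right_notMem hα hρ'⟩).add hrest
      rw [show ρ - α + (α + β - ρ) = β by abel] at hβ'
      exact ⟨1, 1 + n, .single ⟨hα, hI.left_notMem hραPos hρ'⟩, hβ', by omega⟩

/-- A counterexample minimizing the functional `f` defining `Pos` lies in `I`, so it is not
simple and splits into two positive roots with smaller values of `f`. -/
theorem exists_isSumOf_sdiff (hΦ : IsRootSystem Φ) (hPos : IsPositiveSystem Φ Pos)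
    (hsp : ∀ α, IsSimpleRoot Pos α → α ∉ I) {γ : V} (hγ : γ ∈ Pos) :
    ∃ k, IsSumOf (Pos \ I) (k + 1) γ := by
  obtain ⟨f, -, rfl⟩ := hPos
  by_contra hγbad
  set bad := {δ ∈ {a ∈ Φ | 0 < f a} | ¬∃ k, IsSumOf ({a ∈ Φ | 0 < f a} \ I) (k + 1) δ}
  have hfin : bad.Finite := hΦ.finite.subset fun δ hδ => hδ.1.1
  obtain ⟨δ, ⟨hδ, hδbad⟩, hmin⟩ := Set.exists_min_image bad f hfin ⟨γ, hγ, hγbad⟩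
  have hδI : δ ∈ I := by_contra fun hδI => hδbad ⟨0, .single ⟨hδ, hδI⟩⟩
  obtain ⟨b, hb, c, hc, rfl⟩ : ∃ b ∈ {a ∈ Φ | 0 < f a}, ∃ c ∈ {a ∈ Φ | 0 < f a}, δ = b + c := by
    by_contra! hsimple
    exact hsp δ ⟨hδ, hsimple⟩ hδI
  have hgood : ∀ x ∈ {a ∈ Φ | 0 < f a}, f x < f (b + c) →
      ∃ k, IsSumOf ({a ∈ Φ | 0 < f a} \ I) (k + 1) x :=
    fun x hx hlt => by_contra fun hx' => (hmin x ⟨hx, hx'⟩).not_gt hlt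
  obtain ⟨i, hi⟩ := hgood b hb (by rw [map_add]; linarith [hc.2])
  obtain ⟨j, hj⟩ := hgood c hc (by rw [map_add]; linarith [hb.2])
  exact hδbad ⟨i + j + 1, by rw [show i + j + 1 + 1 = i + 1 + (j + 1) by omega]; exact hi.add hj⟩

end Ideal

end

theorem aMinus_add_le_general (Φ Pos I : Set V) (hΦ : IsRootSystem Φ)
    (hPos : IsPositiveSystem Φ Pos)
    (hI : IsUpperIdeal Pos I) (hsp : ∀ α, IsSimpleRoot Pos α → α ∉ I)
    (α β : V) (hα : α ∈ Pos) (hβ : β ∈ Pos) (hαβ : α + β ∈ Pos) :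
    aMinus Pos I α + aMinus Pos I β ≤ aMinus Pos I (α + β) ∧
      aMinus Pos I (α + β) ≤ aMinus Pos I α + aMinus Pos I β + 1 := by
  have hsum {γ : V} (hγ : γ ∈ Pos) := isSumOf_aMinus_succ (exists_isSumOf_sdiff hΦ hPos hsp hγ)
  have hne {γ : V} (hγ : γ ∈ Pos) : γ ≠ 0 := ne_of_mem_of_not_mem (hPos.subset hγ) hΦ.nonzero
  constructor
  · obtain ⟨i, j, hi, hj, hij⟩ :=
      (hsum hαβ).exists_split hΦ hPos hI hα hβ (hPos.subset hαβ)
    have ha := aMinus_lt hi (hne hα)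
    have hb := aMinus_lt hj (hne hβ)
    omega
  · apply aMinus_le
    rw [show aMinus Pos I α + aMinus Pos I β + 1 + 1 =
      aMinus Pos I α + 1 + (aMinus Pos I β + 1) by omega]
    exact (hsum hα).add (hsum hβ)

/-- For a strictly positive upper order ideal `I` of `Φ⁺` and `α, β, α + β ∈ Φ⁺`, the
quantities `a = α_{I,-}`, `b = β_{I,-}`, `c = (α+β)_{I,-}` satisfy
`a + b ≤ c ≤ a + b + 1`. -/
theorem aMinus_add_le (Φ Pos I : Set V) (hΦ : IsRootSystem Φ)
    (hirr : IsIrreducibleRootSystem Φ) (hPos : IsPositiveSystem Φ Pos)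
    (hI : IsUpperIdeal Pos I) (hsp : ∀ α, IsSimpleRoot Pos α → α ∉ I)
    (α β : V) (hα : α ∈ Pos) (hβ : β ∈ Pos) (hαβ : α + β ∈ Pos) :
    aMinus Pos I α + aMinus Pos I β ≤ aMinus Pos I (α + β) ∧
      aMinus Pos I (α + β) ≤ aMinus Pos I α + aMinus Pos I β + 1 :=
  aMinus_add_le_general Φ Pos I hΦ hPos hI hsp α β hα hβ hαβ
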